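/- arXiv:math/0406450 — 3 statements merged into one kernel-verified Lean document; each statement's English description precedes it below -/
import Mathlib

section
/- Let ξ be a complex number on the unit circle satisfying ξ^(2k+2) + ξ^(k+1) - ξ^k + 1 = 0 for some positive integer k. Then ξ = -1 and k is even. -/
/-!
Multiplying `p_k(ξ)` by `ξ̄ ^ (k + 1) = ξ ^ -(k + 1)` gives `2 Re (ξ ^ (k + 1)) + 1 - ξ̄`, whose
imaginary part is `Im ξ`. So a root on the unit circle is real, i.e. `±1`; `p_k(1) = 2`, and
`p_k(-1) = 2 - 2 (-1) ^ k` vanishes exactly for even `k`.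
-/

open ComplexConjugate

section

variable {R : Type*}

def pk [Ring R] (k : ℕ) (x : R) : R :=
  x ^ (2 * k + 2) + x ^ (k + 1) - x ^ k + 1

lemma pk_one [Ring R] (k : ℕ) : pk k (1 : R) = 2 := by
  norm_num [pk, one_add_one_eq_two]

lemma pk_neg_one [Ring R] (k : ℕ) : pk k (-1 : R) = 2 - 2 * (-1) ^ k := by
  have heven : Even (2 * k + 2) := ⟨k + 1, by ring⟩
  rw [pk, heven.neg_one_pow, pow_succ, mul_neg_one, two_mul, ← one_add_one_eq_two]
  generalize (-1 : R) ^ k = s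
  abel

lemma pk_mul_pow_of_mul_eq_one [CommRing R] {x y : R} (hxy : x * y = 1) (k : ℕ) :
    pk k x * y ^ (k + 1) = x ^ (k + 1) + y ^ (k + 1) + 1 - y := by
  calc pk k x * y ^ (k + 1)
      = x ^ (k + 1) * (x * y) ^ (k + 1) + (x * y) ^ (k + 1) - (x * y) ^ k * y + y ^ (k + 1) := by
        unfold pk; ring
    _ = x ^ (k + 1) + y ^ (k + 1) + 1 - y := by rw [hxy]; ring

end

lemma Complex.im_eq_zero_of_pk_eq_zero {ξ : ℂ} (hξ : ‖ξ‖ = 1) {k : ℕ} (hroot : pk k ξ = 0) :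
    ξ.im = 0 := by
  have hconj : ξ * conj ξ = 1 := by
    rw [Complex.mul_conj, Complex.normSq_eq_norm_sq, hξ]; norm_num
  have h := congrArg Complex.im (pk_mul_pow_of_mul_eq_one hconj k)
  rw [hroot, zero_mul, ← map_pow] at h
  simp only [Complex.zero_im, Complex.add_im, Complex.sub_im, Complex.conj_im, Complex.one_im] at h
  linarith

lemma Complex.eq_one_or_eq_neg_one_of_norm_eq_one_of_im_eq_zero {ξ : ℂ} (hξ : ‖ξ‖ = 1)
    (him : ξ.im = 0) : ξ = 1 ∨ ξ = -1 := by
  have hre : |ξ.re| = 1 := (Complex.abs_re_eq_norm.mpr him).trans hξ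
  rcases abs_eq zero_le_one |>.mp hre with h | h
  · exact .inl (Complex.ext (by simp [h]) (by simp [him]))
  · exact .inr (Complex.ext (by simp [h]) (by simp [him]))

theorem unit_circle_zero_of_pk_general (k : ℕ) (ξ : ℂ) (hξ : ‖ξ‖ = 1)
    (hroot : ξ ^ (2 * k + 2) + ξ ^ (k + 1) - ξ ^ k + 1 = 0) :
    ξ = -1 ∧ Even k := by
  change pk k ξ = 0 at hroot
  rcases Complex.eq_one_or_eq_neg_one_of_norm_eq_one_of_im_eq_zero hξ
    (Complex.im_eq_zero_of_pk_eq_zero hξ hroot) with rfl | rfl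
  · rw [pk_one] at hroot
    exact absurd hroot two_ne_zero
  · rw [pk_neg_one, sub_eq_zero] at hroot
    refine ⟨rfl, (neg_one_pow_eq_one_iff_even (by norm_num : (-1 : ℂ) ≠ 1)).mp ?_⟩
    simpa using hroot.symm

theorem unit_circle_zero_of_pk (k : ℕ) (hk : 0 < k) (ξ : ℂ) (hξ : ‖ξ‖ = 1)
    (hroot : ξ ^ (2 * k + 2) + ξ ^ (k + 1) - ξ ^ k + 1 = 0) :
    ξ = -1 ∧ Even k :=
  unit_circle_zero_of_pk_general k ξ hξ hroot
end

section
/- The power series f(x,y) = ∑_{n≥1} (x^n/(1-nx)) y^n (viewed as a power series in y with coefficients rational functions in x) satisfies the differential equation x y² (1-xy) ∂²f/∂y² - y(1 - xy + x²y) ∂f/∂y + f = 0; hence f is D-finite in y. -/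
/-!
Write `θ = y d/dy`. The differential operator of the equation factors as
`-(θ - 1) ∘ (1 - xy) ∘ (1 - xθ)`. Since `(1 - xθ)` multiplies the `n`-th coefficient by `1 - nx`,
it sends `f` to `∑_{n ≥ 1} xⁿyⁿ = xy / (1 - xy)`; multiplying by `1 - xy` gives `xy`,
which `θ - 1` annihilates.
-/

open PowerSeries

section Operator

variable {R : Type*} [CommRing R]

theorem mk_pow_mul_one_sub_C_mul_X (a : R) : (mk fun n => a ^ n) * (1 - C a * X) = 1 := by
  simpa [rescale_mk, rescale_X] using congrArg (rescale a) (mk_one_mul_one_sub_eq_one (S := R))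

theorem ode_operator_eq_sub_X_mul_derivative (a : R) (f : R⟦X⟧) :
    C a * X ^ 2 * (1 - C a * X) * d⁄dX R (d⁄dX R f)
        - X * (1 - C a * X + C (a ^ 2) * X) * d⁄dX R f + f
      = (1 - C a * X) * (f - C a * X * d⁄dX R f)
        - X * d⁄dX R ((1 - C a * X) * (f - C a * X * d⁄dX R f)) := by
  simp only [Derivation.leibniz, map_sub, Derivation.map_one_eq_zero, derivative_C,
    derivative_X, smul_eq_mul, map_pow]
  ring

end Operator

section Field

variable {K : Type*} [Field K]

noncomputable def weightedGeomSeries (a : K) : K⟦X⟧ :=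
  mk fun n => if n = 0 then 0 else a ^ n / (1 - n * a)

theorem weightedGeomSeries_sub_C_mul_X_mul_derivative {a : K}
    (ha : ∀ n : ℕ, 1 - n * a ≠ 0) :
    weightedGeomSeries a - C a * X * d⁄dX K (weightedGeomSeries a)
      = C a * X * mk fun n => a ^ n := by
  ext (_ | n)
  · simp [weightedGeomSeries]
  · rw [map_sub, mul_assoc, mul_assoc, coeff_C_mul, coeff_C_mul, coeff_succ_X_mul,
      coeff_succ_X_mul, coeff_derivative]
    simp only [weightedGeomSeries, coeff_mk, Nat.succ_ne_zero, if_false]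
    have hn := ha (n + 1)
    push_cast at hn ⊢
    field_simp
    ring

theorem weightedGeomSeries_satisfies_ode {a : K} (ha : ∀ n : ℕ, 1 - n * a ≠ 0) :
    C a * X ^ 2 * (1 - C a * X) * d⁄dX K (d⁄dX K (weightedGeomSeries a))
        - X * (1 - C a * X + C (a ^ 2) * X) * d⁄dX K (weightedGeomSeries a)
        + weightedGeomSeries a = 0 := by
  have h : (1 - C a * X) * (weightedGeomSeries a - C a * X * d⁄dX K (weightedGeomSeries a))
      = C a * X := by
    rw [weightedGeomSeries_sub_C_mul_X_mul_derivative ha, mul_left_comm, mul_comm (1 - _),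
      mk_pow_mul_one_sub_C_mul_X, mul_one]
  rw [ode_operator_eq_sub_X_mul_derivative, h]
  simp only [Derivation.leibniz, derivative_C, derivative_X, smul_eq_mul]
  ring

end Field

theorem RatFunc.one_sub_natCast_mul_X_ne_zero {K : Type*} [Field K] (n : ℕ) :
    (1 : RatFunc K) - (n : RatFunc K) * RatFunc.X ≠ 0 := by
  have h : (1 : RatFunc K) - (n : RatFunc K) * RatFunc.X
      = algebraMap (Polynomial K) (RatFunc K) (1 - Polynomial.C (n : K) * Polynomial.X) := by
    simp
  rw [h, ne_eq, map_eq_zero_iff _ (RatFunc.algebraMap_injective K)]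
  intro h0
  simpa using congrArg (Polynomial.coeff · 0) h0

/-- The power series `f(x,y) = ∑_{n≥1} (x^n/(1-nx)) yⁿ`, viewed as a power series in `y`
with coefficients in `ℂ(x)`, satisfies
`x y² (1-xy) f'' - y (1 - xy + x²y) f' + f = 0`, hence is D-finite in `y`. -/
theorem example_series_satisfies_ODE :
    ∀ f : PowerSeries (RatFunc ℂ),
      f = PowerSeries.mk (fun n => if n = 0 then 0 else
            RatFunc.X ^ n / (1 - (n : RatFunc ℂ) * RatFunc.X)) →
      (C (R := RatFunc ℂ) RatFunc.X) * X ^ 2 * (1 - C (R := RatFunc ℂ) RatFunc.X * X) *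
          ((PowerSeries.derivative (RatFunc ℂ)) ((PowerSeries.derivative (RatFunc ℂ)) f))
        - X * (1 - C (R := RatFunc ℂ) RatFunc.X * X + C (R := RatFunc ℂ) (RatFunc.X ^ 2) * X) *
          ((PowerSeries.derivative (RatFunc ℂ)) f)
        + f = 0 := by
  rintro f rfl
  exact weightedGeomSeries_satisfies_ode RatFunc.one_sub_natCast_mul_X_ne_zero
end

section
/- Define c_8(s,x) = -2sx²(s²x² + sx - s + 1)/((1-sx)⁴(1-x)²). For a positive integer k and a root of unity ξ≠±1 with ξ^(k+1) ≠ 1, we have c_8(ξ^k, ξ) ≠ 0. -/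
/-!
Write `s = ξ^k` and `w = ξ^(k+1)`, both on the unit circle. The numerator factor is
`w² + w + 1 - s`, so a zero would put `w² + w + 1 = w (1 + 2 Re w)` on the unit circle,
forcing `Re w = 0` (then `w² + w + 1 = w`, i.e. `s = w`, so `ξ = 1`) or `Re w = -1`
(then `w = -1`, `s = 1`, so `ξ = -1`).
-/

open ComplexConjugate ComplexOrder

namespace Complex

theorem sq_add_self_add_one_of_norm_eq_one {w : ℂ} (hw : ‖w‖ = 1) :
    w ^ 2 + w + 1 = w * (1 + 2 * w.re : ℝ) := by
  have hconj : w * conj w = 1 := by rw [mul_conj', hw]; norm_num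
  have hre := add_conj w
  push_cast at hre ⊢
  linear_combination w * hre - hconj

theorem eq_neg_one_of_norm_eq_one_of_re_eq_neg_one {w : ℂ} (hw : ‖w‖ = 1)
    (hre : w.re = -1) : w = -1 := by
  have hnonpos : w ≤ 0 := re_eq_neg_norm.1 (by rw [hre, hw])
  have h := eq_coe_norm_of_nonneg (neg_nonneg.2 hnonpos)
  rw [norm_neg, hw, ofReal_one] at h
  exact neg_eq_iff_eq_neg.1 h

theorem sq_add_self_add_one_eq_self_or_eq_neg_one {w : ℂ} (hw : ‖w‖ = 1)
    (hnorm : ‖w ^ 2 + w + 1‖ = 1) : w ^ 2 + w + 1 = w ∨ w = -1 := by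
  rw [sq_add_self_add_one_of_norm_eq_one hw] at hnorm ⊢
  rw [norm_mul, hw, one_mul, norm_real, Real.norm_eq_abs] at hnorm
  rcases abs_eq zero_le_one |>.1 hnorm with h | h
  · left
    rw [h, ofReal_one, mul_one]
  · right
    exact eq_neg_one_of_norm_eq_one_of_re_eq_neg_one hw (by linarith)

end Complex

theorem c8_numerator_ne_zero {ξ : ℂ} (hξ : ‖ξ‖ = 1) (k : ℕ) (h1 : ξ ≠ 1) (hneg1 : ξ ≠ -1) :
    (ξ ^ k) ^ 2 * ξ ^ 2 + ξ ^ k * ξ - ξ ^ k + 1 ≠ 0 := by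
  intro hzero
  have hξ0 : ξ ≠ 0 := norm_ne_zero_iff.1 (by rw [hξ]; exact one_ne_zero)
  set w := ξ ^ k * ξ with hw
  have hs : w ^ 2 + w + 1 = ξ ^ k := by linear_combination hzero
  have hwnorm : ‖w‖ = 1 := by simp [hw, hξ]
  have hsnorm : ‖w ^ 2 + w + 1‖ = 1 := by simp [hs, hξ]
  rcases Complex.sq_add_self_add_one_eq_self_or_eq_neg_one hwnorm hsnorm with h | h
  · apply h1
    have : ξ ^ k * (ξ - 1) = 0 := by linear_combination hs - h
    exact sub_eq_zero.1 ((mul_eq_zero.1 this).resolve_left (pow_ne_zero k hξ0))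
  · apply hneg1
    have hk : ξ ^ k = 1 := by rw [← hs, h]; ring
    rw [← h, hw, hk, one_mul]

theorem c8_ne_zero_general (k : ℕ) (ξ : ℂ) (hru : ∃ n : ℕ, 0 < n ∧ ξ ^ n = 1)
    (h1 : ξ ≠ 1) (hneg1 : ξ ≠ -1) (hk1 : ξ ^ (k + 1) ≠ 1) :
    -2 * ξ ^ k * ξ ^ 2 * ((ξ ^ k) ^ 2 * ξ ^ 2 + ξ ^ k * ξ - ξ ^ k + 1) /
      ((1 - ξ ^ k * ξ) ^ 4 * (1 - ξ) ^ 2) ≠ 0 := by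
  obtain ⟨n, hn, hξn⟩ := hru
  have hξ : ‖ξ‖ = 1 := Complex.norm_eq_one_of_pow_eq_one hξn hn.ne'
  have hξ0 : ξ ≠ 0 := norm_ne_zero_iff.1 (by rw [hξ]; exact one_ne_zero)
  have hden : (1 - ξ ^ k * ξ) ^ 4 * (1 - ξ) ^ 2 ≠ 0 := by
    rw [← pow_succ]
    exact mul_ne_zero (pow_ne_zero _ (sub_ne_zero.2 hk1.symm))
      (pow_ne_zero _ (sub_ne_zero.2 h1.symm))
  refine div_ne_zero (mul_ne_zero ?_ (c8_numerator_ne_zero hξ k h1 hneg1)) hden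
  exact mul_ne_zero (mul_ne_zero (by norm_num) (pow_ne_zero _ hξ0)) (pow_ne_zero _ hξ0)

/-- `c₈(s,x) = -2sx²(s²x² + sx - s + 1)/((1-sx)⁴(1-x)²)` does not vanish at `s = ξ^k`,
`x = ξ` for a root of unity `ξ ≠ ±1` with `ξ^(k+1) ≠ 1`. -/
theorem c8_ne_zero (k : ℕ) (hk : 0 < k) (ξ : ℂ) (hru : ∃ n : ℕ, 0 < n ∧ ξ ^ n = 1)
    (h1 : ξ ≠ 1) (hneg1 : ξ ≠ -1) (hk1 : ξ ^ (k + 1) ≠ 1) :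
    -2 * ξ ^ k * ξ ^ 2 * ((ξ ^ k) ^ 2 * ξ ^ 2 + ξ ^ k * ξ - ξ ^ k + 1) /
      ((1 - ξ ^ k * ξ) ^ 4 * (1 - ξ) ^ 2) ≠ 0 :=
  c8_ne_zero_general k ξ hru h1 hneg1 hk1
end
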